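/- Fix n ≥ 1 and a = (a₁, …, aₙ) ∈ ℝⁿ with all aⱼ ≠ 0. Let g₁, …, gₙ : ℝⁿ → ℝ be C¹ functions satisfying, for each j, Σᵢ aᵢ∂ᵢgⱼ = 0 and Σᵢ xᵢ∂ᵢgⱼ = 2gⱼ. Define eⱼ(x) = −xⱼ²/aⱼ + gⱼ(x) and the vector fields E = Σⱼ eⱼ∂ⱼ, H = 2Σⱼ xⱼ∂ⱼ, F = Σⱼ aⱼ∂ⱼ on ℝⁿ. Then [H, E] = 2E, [H, F] = −2F and [E, F] = H, i.e. E, H, F realize the Lie algebra sl(2,ℝ) by vector fields on ℝⁿ. -/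

import Mathlib

/-- Partial derivative ∂ᵢf at x of a function on ℝⁿ (modeled as `Fin n → ℝ`). -/
noncomputable def pd {n : ℕ} (f : (Fin n → ℝ) → ℝ) (i : Fin n) (x : Fin n → ℝ) : ℝ :=
  fderiv ℝ f x (Pi.single i 1)

/-- Directional derivative Z(f) = Σⱼ Zⱼ ∂ⱼf of f along the vector field Z. -/
noncomputable def lieD {n : ℕ} (Z : Fin n → (Fin n → ℝ) → ℝ) (f : (Fin n → ℝ) → ℝ)
    (x : Fin n → ℝ) : ℝ :=
  ∑ j, Z j x * pd f j x

/-! `lieD Z f x` is the differential of `f` at `x` applied to the vector `Z(x)`, so it is additive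
in `f` and equals `φ'(xᵢ) Zᵢ(x)` when `f = φ ∘ xᵢ`. Every bracket then reduces to one-variable
calculus on the terms `2xᵢ` and `−xᵢ²/aᵢ` plus the two hypotheses on `gᵢ`: `F` annihilates `gᵢ`,
and `H gᵢ = 4 gᵢ` by Euler's relation for functions homogeneous of degree 2. -/

section

variable {n : ℕ}

theorem lieD_eq_fderiv (Z : Fin n → (Fin n → ℝ) → ℝ) (f : (Fin n → ℝ) → ℝ) (x : Fin n → ℝ) :
    lieD Z f x = fderiv ℝ f x (fun j => Z j x) := by
  conv_rhs => rw [← Finset.univ_sum_single (fun j => Z j x)]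
  simp only [lieD, pd, map_sum]
  refine Finset.sum_congr rfl fun j _ => ?_
  rw [← smul_eq_mul, ← map_smul, ← Pi.single_smul, smul_eq_mul, mul_one]

theorem lieD_const (Z : Fin n → (Fin n → ℝ) → ℝ) (c : ℝ) (x : Fin n → ℝ) :
    lieD Z (fun _ => c) x = 0 := by
  simp [lieD_eq_fderiv]

theorem lieD_comp_coord (Z : Fin n → (Fin n → ℝ) → ℝ) {φ : ℝ → ℝ} (i : Fin n) {x : Fin n → ℝ}
    (hφ : DifferentiableAt ℝ φ (x i)) :
    lieD Z (fun y => φ (y i)) x = deriv φ (x i) * Z i x := by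
  have h : HasFDerivAt (fun y : Fin n → ℝ => φ (y i))
      (deriv φ (x i) • ContinuousLinearMap.proj (R := ℝ) (φ := fun _ : Fin n => ℝ) i) x :=
    hφ.hasDerivAt.comp_hasFDerivAt x (hasFDerivAt_apply i x)
  rw [lieD_eq_fderiv, h.fderiv]
  simp

theorem lieD_add (Z : Fin n → (Fin n → ℝ) → ℝ) {f h : (Fin n → ℝ) → ℝ} {x : Fin n → ℝ}
    (hf : DifferentiableAt ℝ f x) (hh : DifferentiableAt ℝ h x) :
    lieD Z (fun y => f y + h y) x = lieD Z f x + lieD Z h x := by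
  simp only [lieD_eq_fderiv, fderiv_fun_add hf hh, add_apply]

theorem lieD_const_mul_left (Z : Fin n → (Fin n → ℝ) → ℝ) (c : ℝ) (f : (Fin n → ℝ) → ℝ)
    (x : Fin n → ℝ) : lieD (fun j y => c * Z j y) f x = c * lieD Z f x := by
  simp only [lieD, Finset.mul_sum, mul_assoc]
end

theorem sl2_realisation_Rn_general (n : ℕ) (a : Fin n → ℝ) (ha : ∀ j, a j ≠ 0)
    (g : Fin n → (Fin n → ℝ) → ℝ) (hg : ∀ j, ContDiff ℝ 1 (g j))
    (hgF : ∀ j (x : Fin n → ℝ), ∑ i, a i * pd (g j) i x = 0)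
    (hgH : ∀ j (x : Fin n → ℝ), ∑ i, x i * pd (g j) i x = 2 * g j x) :
    ∀ (i : Fin n) (x : Fin n → ℝ),
      (lieD (fun j y => 2 * y j) (fun y => -(y i) ^ 2 / a i + g i y) x -
          lieD (fun j y => -(y j) ^ 2 / a j + g j y) (fun y => 2 * y i) x =
        2 * (-(x i) ^ 2 / a i + g i x)) ∧
      (lieD (fun j y => 2 * y j) (fun _ => a i) x -
          lieD (fun j _ => a j) (fun y => 2 * y i) x = -2 * a i) ∧
      (lieD (fun j y => -(y j) ^ 2 / a j + g j y) (fun _ => a i) x -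
          lieD (fun j _ => a j) (fun y => -(y i) ^ 2 / a i + g i y) x = 2 * x i) := by
  intro i x
  have hHi : ∀ Z, lieD Z (fun y => 2 * y i) x = 2 * Z i x := fun Z => by
    rw [lieD_comp_coord Z (φ := fun t => 2 * t) i (by fun_prop)]
    simp
  have hEi : ∀ Z, lieD Z (fun y => -(y i) ^ 2 / a i + g i y) x =
      -(2 * x i) / a i * Z i x + lieD Z (g i) x := fun Z => by
    rw [lieD_add Z (f := fun y => -(y i) ^ 2 / a i) (by fun_prop)
      ((hg i).differentiable one_ne_zero x), lieD_comp_coord Z (φ := fun t => -t ^ 2 / a i) i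
      (by fun_prop)]
    simp
  have hHg : lieD (fun j y => 2 * y j) (g i) x = 2 * (2 * g i x) :=
    (lieD_const_mul_left (fun j y => y j) 2 (g i) x).trans (congrArg _ (hgH i x))
  have hFg : lieD (fun j _ => a j) (g i) x = 0 := hgF i x
  refine ⟨?_, ?_, ?_⟩
  · rw [hEi, hHg, hHi]
    ring
  · rw [lieD_const, hHi]
    ring
  · rw [lieD_const, hEi, hFg]
    field_simp [ha i]
    ring

/-- In ℝⁿ (n ≥ 1), with eⱼ = −xⱼ²/aⱼ + gⱼ, where Σᵢaᵢ∂ᵢgⱼ = 0 and Σᵢxᵢ∂ᵢgⱼ = 2gⱼ,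
the fields E = Σeⱼ∂ⱼ, H = 2Σxⱼ∂ⱼ, F = Σaⱼ∂ⱼ realize sl(2,ℝ):
[H,E] = 2E, [H,F] = −2F, [E,F] = H, where [X,Y]ᵢ = X(Yᵢ) − Y(Xᵢ). -/
theorem sl2_realisation_Rn (n : ℕ) (hn : 1 ≤ n) (a : Fin n → ℝ) (ha : ∀ j, a j ≠ 0)
    (g : Fin n → (Fin n → ℝ) → ℝ) (hg : ∀ j, ContDiff ℝ 1 (g j))
    (hgF : ∀ j (x : Fin n → ℝ), ∑ i, a i * pd (g j) i x = 0)
    (hgH : ∀ j (x : Fin n → ℝ), ∑ i, x i * pd (g j) i x = 2 * g j x) :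
    ∀ (i : Fin n) (x : Fin n → ℝ),
      (lieD (fun j y => 2 * y j) (fun y => -(y i) ^ 2 / a i + g i y) x -
          lieD (fun j y => -(y j) ^ 2 / a j + g j y) (fun y => 2 * y i) x =
        2 * (-(x i) ^ 2 / a i + g i x)) ∧
      (lieD (fun j y => 2 * y j) (fun _ => a i) x -
          lieD (fun j _ => a j) (fun y => 2 * y i) x = -2 * a i) ∧
      (lieD (fun j y => -(y j) ^ 2 / a j + g j y) (fun _ => a i) x -
          lieD (fun j _ => a j) (fun y => -(y i) ^ 2 / a i + g i y) x = 2 * x i) :=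
  sl2_realisation_Rn_general n a ha g hg hgF hgH
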